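/- For every σ > 0, the infinite matrix J is Hilbert–Schmidt on ℓ²(ℕ): the double series ∑_{m=0}^{∞} ∑_{n=0}^{∞} J_{mn}² converges (is finite). -/

import Mathlib

open MeasureTheory Real Complex

/-- Spherical Bessel function of the first kind (Poisson integral representation). -/
noncomputable def sphBessel (n : ℕ) (x : ℝ) : ℝ :=
  x ^ n / (2 ^ (n + 1) * (n.factorial : ℝ)) *
    ∫ θ in (0:ℝ)..Real.pi, Real.cos (x * Real.cos θ) * Real.sin θ ^ (2 * n + 1)

/-- Normalized spherical Bessel functions. -/
noncomputable def jbar (σ : ℝ) (n : ℕ) (t : ℝ) : ℝ :=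
  Real.sqrt (σ * (2 * (n : ℝ) + 1) / Real.pi) * sphBessel n (σ * t)

/-- The matrix of overlap integrals of the normalized spherical Bessel functions on (-1,1). -/
noncomputable def Jmat (σ : ℝ) (m n : ℕ) : ℝ :=
  ∫ s in (-1:ℝ)..1, jbar σ m s * jbar σ n s

noncomputable def bBound (σ : ℝ) (n : ℕ) : ℝ :=
  Real.sqrt (σ * (2 * (n : ℝ) + 1) / Real.pi) *
    (σ ^ n * Real.pi / (2 ^ (n + 1) * (n.factorial : ℝ)))

lemma sphBessel_bound (n : ℕ) (x : ℝ) :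
    |sphBessel n x| ≤ |x| ^ n * Real.pi / (2 ^ (n + 1) * (n.factorial : ℝ)) := by
  have hd : (0:ℝ) < 2 ^ (n + 1) * (n.factorial : ℝ) := by positivity
  have hI : ‖∫ θ in (0:ℝ)..Real.pi,
      Real.cos (x * Real.cos θ) * Real.sin θ ^ (2 * n + 1)‖ ≤ 1 * |Real.pi - 0| := by
    apply intervalIntegral.norm_integral_le_of_norm_le_const
    intro θ _
    have h1 : |Real.cos (x * Real.cos θ)| ≤ 1 := Real.abs_cos_le_one _
    have h2 : |Real.sin θ ^ (2 * n + 1)| ≤ 1 := by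
      rw [_root_.abs_pow]
      exact pow_le_one₀ (abs_nonneg _) (Real.abs_sin_le_one θ)
    calc ‖Real.cos (x * Real.cos θ) * Real.sin θ ^ (2 * n + 1)‖
        = |Real.cos (x * Real.cos θ)| * |Real.sin θ ^ (2 * n + 1)| := _root_.abs_mul _ _
      _ ≤ 1 * 1 := mul_le_mul h1 h2 (abs_nonneg _) zero_le_one
      _ = 1 := one_mul 1
  rw [Real.norm_eq_abs, sub_zero, _root_.abs_of_nonneg Real.pi_pos.le, one_mul] at hI
  have : |sphBessel n x| = |x| ^ n / (2 ^ (n + 1) * (n.factorial : ℝ)) *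
      |∫ θ in (0:ℝ)..Real.pi, Real.cos (x * Real.cos θ) * Real.sin θ ^ (2 * n + 1)| := by
    rw [sphBessel, _root_.abs_mul, _root_.abs_div, _root_.abs_pow, _root_.abs_of_pos hd]
  rw [this]
  calc |x| ^ n / (2 ^ (n + 1) * (n.factorial : ℝ)) *
      |∫ θ in (0:ℝ)..Real.pi, Real.cos (x * Real.cos θ) * Real.sin θ ^ (2 * n + 1)|
      ≤ |x| ^ n / (2 ^ (n + 1) * (n.factorial : ℝ)) * Real.pi := by
        apply mul_le_mul_of_nonneg_left hI (by positivity)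
    _ = |x| ^ n * Real.pi / (2 ^ (n + 1) * (n.factorial : ℝ)) := by ring

lemma jbar_bound (σ : ℝ) (hσ : 0 < σ) (n : ℕ) (t : ℝ) (ht : |t| ≤ 1) :
    |jbar σ n t| ≤ bBound σ n := by
  have hs : (0:ℝ) ≤ Real.sqrt (σ * (2 * (n : ℝ) + 1) / Real.pi) := Real.sqrt_nonneg _
  rw [jbar, bBound, _root_.abs_mul, _root_.abs_of_nonneg hs]
  apply mul_le_mul_of_nonneg_left _ hs
  calc |sphBessel n (σ * t)|
      ≤ |σ * t| ^ n * Real.pi / (2 ^ (n + 1) * (n.factorial : ℝ)) := sphBessel_bound n _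
    _ ≤ σ ^ n * Real.pi / (2 ^ (n + 1) * (n.factorial : ℝ)) := by
        have : |σ * t| ^ n ≤ σ ^ n := by
          apply pow_le_pow_left₀ (abs_nonneg _)
          rw [_root_.abs_mul, _root_.abs_of_pos hσ]
          calc σ * |t| ≤ σ * 1 := by nlinarith
            _ = σ := mul_one σ
        have hd2 : (0:ℝ) < 2 ^ (n + 1) * (n.factorial : ℝ) := by positivity
        exact (div_le_div_iff_of_pos_right hd2).mpr (mul_le_mul_of_nonneg_right this Real.pi_pos.le)

lemma Jmat_bound (σ : ℝ) (hσ : 0 < σ) (m n : ℕ) :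
    |Jmat σ m n| ≤ bBound σ m * bBound σ n * 2 := by
  have h : ‖∫ s in (-1:ℝ)..1, jbar σ m s * jbar σ n s‖ ≤
      bBound σ m * bBound σ n * |(1:ℝ) - (-1)| := by
    apply intervalIntegral.norm_integral_le_of_norm_le_const
    intro s hs
    have hs' : |s| ≤ 1 := by
      rw [Set.uIoc_of_le (by norm_num : (-1:ℝ) ≤ 1)] at hs
      rw [abs_le]; exact ⟨hs.1.le, hs.2⟩
    calc ‖jbar σ m s * jbar σ n s‖ = |jbar σ m s| * |jbar σ n s| := _root_.abs_mul _ _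
      _ ≤ bBound σ m * bBound σ n :=
          mul_le_mul (jbar_bound σ hσ m s hs') (jbar_bound σ hσ n s hs')
            (abs_nonneg _) ((abs_nonneg _).trans (jbar_bound σ hσ m s hs'))
  rw [Real.norm_eq_abs] at h
  have : |(1:ℝ) - (-1)| = 2 := by norm_num
  rw [this] at h
  exact h

lemma two_n_add_one_le (n : ℕ) : (2 * (n : ℝ) + 1) ≤ 3 * 2 ^ n := by
  induction n with
  | zero => norm_num
  | succ k ih =>
    push_cast
    push_cast at ih
    have : (0:ℝ) < 2 ^ k := by positivity
    calc 2 * ((k:ℝ) + 1) + 1 = (2 * k + 1) + 2 := by ring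
      _ ≤ 3 * 2 ^ k + 2 := by linarith
      _ ≤ 3 * 2 ^ (k + 1) := by
          have h1 : (1:ℝ) ≤ 2 ^ k := one_le_pow₀ (by norm_num)
          rw [pow_succ]; linarith

lemma bBound_nonneg (σ : ℝ) (hσ : 0 < σ) (n : ℕ) : 0 ≤ bBound σ n := by
  unfold bBound; positivity

lemma summable_bBound_sq (σ : ℝ) (hσ : 0 < σ) :
    Summable (fun n => bBound σ n ^ 2) := by
  have hsum : Summable (fun n : ℕ => (3 * σ * Real.pi) * ((σ ^ 2 / 2) ^ n / n.factorial)) :=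
    (Real.summable_pow_div_factorial (σ ^ 2 / 2)).mul_left _
  apply Summable.of_nonneg_of_le (fun n => by positivity) _ hsum
  intro n
  have hπ := Real.pi_pos
  have harg : 0 ≤ σ * (2 * (n : ℝ) + 1) / Real.pi := by positivity
  have hfac : (1:ℝ) ≤ n.factorial := by exact_mod_cast n.factorial_pos
  rw [bBound, mul_pow, Real.sq_sqrt harg]
  have hkey : (2 * (n : ℝ) + 1) ≤ 3 * 2 ^ n := two_n_add_one_le n
  have hX : (0:ℝ) < σ ^ (2 * n + 1) * Real.pi / (4 * 4 ^ n * ((n.factorial : ℝ)) ^ 2) := by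
    positivity
  have e1 : σ * (2 * (n : ℝ) + 1) / Real.pi *
      (σ ^ n * Real.pi / (2 ^ (n + 1) * (n.factorial : ℝ))) ^ 2 =
      (2 * (n : ℝ) + 1) * (σ ^ (2 * n + 1) * Real.pi / (4 * 4 ^ n * ((n.factorial : ℝ)) ^ 2)) := by
    have h1 : ((n.factorial : ℝ)) ≠ 0 := by positivity
    have h4 : ((2:ℝ)) ^ (n * 2) = 4 ^ n := by rw [mul_comm, pow_mul]; norm_num
    field_simp
    rw [← h4]
    ring
  have e2 : (3 * σ * Real.pi) * ((σ ^ 2 / 2) ^ n / (n.factorial : ℝ)) =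
      (3 * 2 ^ n) * (σ ^ (2 * n + 1) * Real.pi / (4 * 4 ^ n * ((n.factorial : ℝ)) ^ 2)) *
        (4 * (n.factorial : ℝ)) := by
    have h1 : ((n.factorial : ℝ)) ≠ 0 := by positivity
    have h4 : ((2:ℝ)) ^ (n * 2) = 4 ^ n := by rw [mul_comm, pow_mul]; norm_num
    field_simp
    rw [← h4]
    have h5 : (1/2:ℝ) ^ n * 2 ^ (n * 2) = 2 ^ n := by
      rw [pow_mul', ← mul_pow]; norm_num
    linear_combination (σ * σ ^ (n * 2)) * h5
  rw [e1, e2]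
  calc (2 * (n : ℝ) + 1) * (σ ^ (2 * n + 1) * Real.pi / (4 * 4 ^ n * ((n.factorial : ℝ)) ^ 2))
      ≤ (3 * 2 ^ n) * (σ ^ (2 * n + 1) * Real.pi / (4 * 4 ^ n * ((n.factorial : ℝ)) ^ 2)) :=
        mul_le_mul_of_nonneg_right hkey hX.le
    _ ≤ (3 * 2 ^ n) * (σ ^ (2 * n + 1) * Real.pi / (4 * 4 ^ n * ((n.factorial : ℝ)) ^ 2)) *
        (4 * (n.factorial : ℝ)) := by
        apply le_mul_of_one_le_right (by positivity)
        linarith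

theorem Jmat_hilbertSchmidt (σ : ℝ) (hσ : 0 < σ) :
    Summable (fun p : ℕ × ℕ => (Jmat σ p.1 p.2) ^ 2) := by
  have hb := summable_bBound_sq σ hσ
  have hf : Summable (fun n : ℕ => 2 * bBound σ n ^ 2) := hb.mul_left 2
  have hprod : Summable (fun p : ℕ × ℕ =>
      (2 * bBound σ p.1 ^ 2) * (2 * bBound σ p.2 ^ 2)) :=
    hf.mul_of_nonneg hf (fun n => by positivity) (fun n => by positivity)
  apply Summable.of_nonneg_of_le (fun p => sq_nonneg _) _ hprod
  intro p
  have h := Jmat_bound σ hσ p.1 p.2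
  have h0 : (0:ℝ) ≤ |Jmat σ p.1 p.2| := abs_nonneg _
  calc Jmat σ p.1 p.2 ^ 2 = |Jmat σ p.1 p.2| ^ 2 := (_root_.sq_abs _).symm
    _ ≤ (bBound σ p.1 * bBound σ p.2 * 2) ^ 2 := by
        apply pow_le_pow_left₀ h0 h
    _ = (2 * bBound σ p.1 ^ 2) * (2 * bBound σ p.2 ^ 2) := by ring
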